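/- Let R be a ring and let ⋯ → X(i) →^{ε(i)} X(i−1) → ⋯ → X(r+1) →^{ε(r+1)} X(r) be a sequence of morphisms of cochain complexes of R-modules. Suppose that for each degree n there exists an integer s_n such that the degree-n component ε(i)^n is an isomorphism for all i ≥ s_n+1. Then the sequence of complexes 0 → lim X(i) → ∏_i X(i) →^{id−shift} ∏_i X(i) → 0 is exact and degree-wise split; in particular it induces in the homotopy category K(R) an isomorphism holim X(i) ≅ lim X(i). -/

import Mathlib

open CategoryTheory CategoryTheory.Limits CategoryTheory.Pretriangulated

noncomputable section

namespace IKpaper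

/-! ### Generic notions in (pre)triangulated categories -/

section Generic

universe w v u

variable {C : Type u} [Category.{v} C]

/-- `pt` together with the maps `κ i : f i ⟶ pt` is a coproduct of the family `f`
inside the full subcategory of objects satisfying `pred`. -/
def IsCoproductConeIn (pred : C → Prop) {ι : Type w} (f : ι → C) (pt : C)
    (κ : ∀ i, f i ⟶ pt) : Prop :=
  pred pt ∧ ∀ W : C, pred W →
    Function.Bijective (fun (g : pt ⟶ W) => fun i => κ i ≫ g : (pt ⟶ W) → ∀ i, f i ⟶ W)

/-- `pt` together with the maps `π i : pt ⟶ f i` is a product of the family `f`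
inside the full subcategory of objects satisfying `pred`. -/
def IsProductConeIn (pred : C → Prop) {ι : Type w} (f : ι → C) (pt : C)
    (π : ∀ i, pt ⟶ f i) : Prop :=
  pred pt ∧ ∀ W : C, pred W →
    Function.Bijective (fun (g : W ⟶ pt) => fun i => g ≫ π i : (W ⟶ pt) → ∀ i, W ⟶ f i)

/-- An object `X` of the full subcategory determined by `pred` is compact if
`Hom(X, -)` sends coproducts (in that subcategory) to direct sums of abelian groups;
this is expressed by the conjunction of the surjectivity statement (every map to a
coproduct is a finite sum of maps factoring through the inclusions) and the injectivity
statement below. -/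
def IsCompactIn [Preadditive C] (pred : C → Prop) (X : C) : Prop :=
  pred X ∧ ∀ (ι : Type w) (f : ι → C) (pt : C) (κ : ∀ i, f i ⟶ pt),
    (∀ i, pred (f i)) → IsCoproductConeIn pred f pt κ →
    (∀ g : X ⟶ pt, ∃ (s : Finset ι) (h : ∀ i, X ⟶ f i), g = ∑ i ∈ s, h i ≫ κ i) ∧
    (∀ (s : Finset ι) (h : ∀ i, X ⟶ f i), (∑ i ∈ s, h i ≫ κ i) = 0 → ∀ i ∈ s, h i = 0)

variable [HasZeroObject C] [HasShift C ℤ] [Preadditive C]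
  [∀ n : ℤ, (CategoryTheory.shiftFunctor C n).Additive] [Pretriangulated C]

/-- The full subcategory determined by `pred` is compactly generated: it has coproducts,
and there is a set `G` of compact objects such that any object `Y` with
`Hom(Σⁿ X, Y) = 0` for all `X ∈ G` and `n ∈ ℤ` is zero. -/
def IsCompactlyGeneratedIn (pred : C → Prop) : Prop :=
  (∀ (ι : Type w) (f : ι → C), (∀ i, pred (f i)) →
      ∃ (pt : C) (κ : ∀ i, f i ⟶ pt), IsCoproductConeIn pred f pt κ) ∧
  ∃ G : Set C, (∀ X ∈ G, IsCompactIn.{w} pred X) ∧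
    ∀ Y : C, pred Y → (∀ X ∈ G, ∀ (n : ℤ) (f : (X⟦n⟧ : C) ⟶ Y), f = 0) → IsZero Y

/-- A thick subcategory of the full subcategory of objects satisfying `pred`:
a triangulated subcategory that is closed under retracts. -/
structure IsThickIn (pred : C → Prop) (P : Set C) : Prop where
  subset : ∀ X ∈ P, pred X
  zero_mem : ∀ X : C, pred X → IsZero X → X ∈ P
  iso_mem : ∀ X ∈ P, ∀ Y : C, pred Y → Nonempty (X ≅ Y) → Y ∈ P
  shift_mem : ∀ X ∈ P, ∀ (n : ℤ), ∀ Y : C, pred Y → Nonempty (Y ≅ (X⟦n⟧ : C)) → Y ∈ P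
  ext_mem : ∀ T : Triangle C, T ∈ (distTriang C) →
    T.obj₁ ∈ P → T.obj₂ ∈ P → pred T.obj₃ → T.obj₃ ∈ P
  retract_mem : ∀ X ∈ P, ∀ Y : C, pred Y →
    (∃ (s : Y ⟶ X) (r : X ⟶ Y), s ≫ r = 𝟙 Y) → Y ∈ P

/-- A localizing subcategory: a thick subcategory closed under coproducts. -/
structure IsLocalizingIn (pred : C → Prop) (P : Set C) extends IsThickIn pred P : Prop where
  coprod_mem : ∀ (ι : Type w) (f : ι → C), (∀ i, f i ∈ P) → ∀ (pt : C) (κ : ∀ i, f i ⟶ pt),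
    IsCoproductConeIn pred f pt κ → pt ∈ P

/-- A colocalizing subcategory: a thick subcategory closed under products. -/
structure IsColocalizingIn (pred : C → Prop) (P : Set C) extends IsThickIn pred P : Prop where
  prod_mem : ∀ (ι : Type w) (f : ι → C), (∀ i, f i ∈ P) → ∀ (pt : C) (π : ∀ i, pt ⟶ f i),
    IsProductConeIn pred f pt π → pt ∈ P

/-- The smallest thick subcategory of the full subcategory of objects satisfying `pred`
containing a class `S`. -/
def thickIn (pred : C → Prop) (S : Set C) : Set C :=
  ⋂₀ {P | IsThickIn pred P ∧ S ⊆ P}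

/-- The smallest localizing subcategory containing `S`. -/
def locIn (pred : C → Prop) (S : Set C) : Set C :=
  ⋂₀ {P | IsLocalizingIn.{w} pred P ∧ S ⊆ P}

/-- The smallest colocalizing subcategory containing `S`. -/
def colocIn (pred : C → Prop) (S : Set C) : Set C :=
  ⋂₀ {P | IsColocalizingIn.{w} pred P ∧ S ⊆ P}


/-- The right orthogonal of a class of objects: the objects `Y` such that every morphism
`Σⁿ X ⟶ Y` with `X` in the class vanishes. -/
def rightPerp (C' : Set C) : Set C :=
  {Y | ∀ X ∈ C', ∀ (n : ℤ) (f : (X⟦n⟧ : C) ⟶ Y), f = 0}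

/-- The class of morphisms of the full subcategory of objects satisfying `pred` admitting
a cone (computed in the ambient triangulated category) belonging to `P`. Localizing at
this class produces the Verdier quotient by the subcategory `P`. -/
def coneIn (pred : C → Prop) (P : Set C) : MorphismProperty (ObjectProperty.FullSubcategory pred) :=
  fun X Y f => ∃ (Z : C) (g : Y.obj ⟶ Z) (h : Z ⟶ (X.obj⟦(1 : ℤ)⟧ : C)),
    Triangle.mk ((ObjectProperty.ι pred).map f) g h ∈ (distTriang C) ∧ Z ∈ P

/-- Compact generation of a (Verdier quotient) category `Q`, localization of the full
subcategory of objects satisfying `pred` via `L`: there are coproducts, and a set `G`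
of objects of the base category, stable under the shift of the ambient triangulated
category up to isomorphism, whose images under `L` are compact and detect vanishing. -/
def QuotCompactlyGenerated (pred : C → Prop) {Q : Type*} [Category Q] [Preadditive Q]
    (L : ObjectProperty.FullSubcategory pred ⥤ Q) : Prop :=
  (∀ (ι : Type w) (f : ι → Q), ∃ (pt : Q) (κ : ∀ i, f i ⟶ pt),
      IsCoproductConeIn (fun _ : Q => True) f pt κ) ∧
  ∃ G : Set (ObjectProperty.FullSubcategory pred),
    (∀ X ∈ G, ∀ n : ℤ, ∃ X' ∈ G, Nonempty ((X'.obj : C) ≅ ((X.obj)⟦n⟧ : C))) ∧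
    (∀ X ∈ G, IsCompactIn.{w} (fun _ : Q => True) (L.obj X)) ∧
    ∀ Y : Q, (∀ X ∈ G, ∀ f : L.obj X ⟶ Y, f = 0) → IsZero Y

/-- A fully faithful functor which is an equivalence up to direct factors. -/
def IsEquivUpToDirectFactors {D : Type*} [Category D] (F : C ⥤ D) : Prop :=
  F.Full ∧ F.Faithful ∧
    ∀ d : D, ∃ (c : C) (s : d ⟶ F.obj c) (r : F.obj c ⟶ d), s ≫ r = 𝟙 d

end Generic

/-! ### The homotopy category of complexes of `R`-modules. -/

/-- The category of cochain complexes of `R`-modules. -/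
abbrev Cx (R : Type) [Ring R] := CochainComplex (ModuleCat R) ℤ

/-- The homotopy category `K(R)` of cochain complexes of `R`-modules. -/
abbrev Kh (R : Type) [Ring R] := HomotopyCategory (ModuleCat R) (ComplexShape.up ℤ)

/-- The canonical functor from complexes to the homotopy category. -/
abbrev toK (R : Type) [Ring R] : Cx R ⥤ Kh R := HomotopyCategory.quotient _ _

section GeneralRing

variable (R : Type) [Ring R]

/-- A complex of projective modules. -/
def IsProjCx (X : Cx R) : Prop := ∀ n, Projective (X.X n)

/-- A complex of injective modules. -/
def IsInjCx (X : Cx R) : Prop := ∀ n, Injective (X.X n)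

/-- `K(Prj R)`, the homotopy category of complexes of projective modules. -/
abbrev KProjCat := ObjectProperty.FullSubcategory fun X : Kh R => IsProjCx R X.as

/-- `K(Inj R)`, the homotopy category of complexes of injective modules. -/
abbrev KInjCat := ObjectProperty.FullSubcategory fun X : Kh R => IsInjCx R X.as

abbrev incProj : KProjCat R ⥤ Kh R := ObjectProperty.ι _
abbrev incInj : KInjCat R ⥤ Kh R := ObjectProperty.ι _

/-- A module viewed as a complex concentrated in degree `0`, in the homotopy category. -/
def singleK (M : ModuleCat R) : Kh R :=
  (toK R).obj ((HomologicalComplex.single (ModuleCat R) (ComplexShape.up ℤ) 0).obj M)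

/-- Acyclicity of an object of the homotopy category. -/
def IsAcyclicK (X : Kh R) : Prop :=
  ∀ n : ℤ, IsZero ((HomotopyCategory.homologyFunctor (ModuleCat R) (ComplexShape.up ℤ) n).obj X)

/-- A quasi-isomorphism in the homotopy category. -/
def IsQIsoK {R : Type} [Ring R] {X Y : Kh R} (f : X ⟶ Y) : Prop :=
  ∀ n : ℤ, IsIso ((HomotopyCategory.homologyFunctor (ModuleCat R) (ComplexShape.up ℤ) n).map f)

/-- A complex `X` of projectives is totally acyclic if it is acyclic and moreover
`Hom_R(X, Q)` is acyclic for each projective module `Q`; the latter is equivalent to the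
vanishing of `Hom_{K(R)}(X, Σⁿ Q)` for all `n ∈ ℤ`. -/
def IsTotAcyclicProj (X : Kh R) : Prop :=
  IsAcyclicK R X ∧ ∀ (M : ModuleCat R), Projective M →
    ∀ (n : ℤ) (f : X ⟶ ((singleK R M)⟦n⟧ : Kh R)), f = 0

/-- A complex `Y` of injectives is totally acyclic if it is acyclic and moreover
`Hom_R(J, Y)` is acyclic for each injective module `J`; the latter is equivalent to the
vanishing of `Hom_{K(R)}(Σ⁻ⁿ J, Y)` for all `n ∈ ℤ`. -/
def IsTotAcyclicInj (Y : Kh R) : Prop :=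
  IsAcyclicK R Y ∧ ∀ (M : ModuleCat R), Injective M →
    ∀ (n : ℤ) (f : ((singleK R M)⟦n⟧ : Kh R) ⟶ Y), f = 0

/-- A K-projective object: every map to an acyclic complex is null-homotopic. -/
def IsKProjective (X : Kh R) : Prop := ∀ (Y : Kh R), IsAcyclicK R Y → ∀ f : X ⟶ Y, f = 0

/-- A K-injective object: every map from an acyclic complex is null-homotopic. -/
def IsKInjective (Y : Kh R) : Prop := ∀ (X : Kh R), IsAcyclicK R X → ∀ f : X ⟶ Y, f = 0

/-- An injective resolution of the `R`-module `R`: a bounded below complex of injectives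
which is quasi-isomorphic to `R`. -/
structure InjResOfRing (R : Type) [Ring R] where
  iR : Cx R
  inj : IsInjCx R iR
  bdd : ∀ n : ℤ, n < 0 → IsZero (iR.X n)
  res : (singleK R (ModuleCat.of R R)) ⟶ (toK R).obj iR
  qiso : IsQIsoK res


abbrev projPred : Kh R → Prop := fun X => IsProjCx R X.as
abbrev injPred : Kh R → Prop := fun X => IsInjCx R X.as

/-- The projective modules, viewed as complexes concentrated in degree `0`. -/
def projSingles : Set (Kh R) :=
  {X | ∃ M : ModuleCat R, Projective M ∧ Nonempty (X ≅ singleK R M)}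

/-- The injective modules, viewed as complexes concentrated in degree `0`. -/
def injSingles : Set (Kh R) :=
  {Y | ∃ M : ModuleCat R, Injective M ∧ Nonempty (Y ≅ singleK R M)}

/-- `K_prj(R)`: the K-projective complexes of projectives. -/
abbrev KpCat := ObjectProperty.FullSubcategory fun X : Kh R => IsProjCx R X.as ∧ IsKProjective R X

/-- `K_inj(R)`: the K-injective complexes of injectives. -/
abbrev KiCat := ObjectProperty.FullSubcategory fun Y : Kh R => IsInjCx R Y.as ∧ IsKInjective R Y

abbrev incKp : KpCat R ⥤ KProjCat R := ObjectProperty.ιOfLE fun _ h => h.1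
abbrev incKi : KiCat R ⥤ KInjCat R := ObjectProperty.ιOfLE fun _ h => h.1

/-- `K_tac(Prj R)`: the totally acyclic complexes of projectives. -/
abbrev KtpCat := ObjectProperty.FullSubcategory fun X : Kh R => IsProjCx R X.as ∧ IsTotAcyclicProj R X

/-- `K_tac(Inj R)`: the totally acyclic complexes of injectives. -/
abbrev KtiCat := ObjectProperty.FullSubcategory fun Y : Kh R => IsInjCx R Y.as ∧ IsTotAcyclicInj R Y

abbrev incKtp : KtpCat R ⥤ KProjCat R := ObjectProperty.ιOfLE fun _ h => h.1
abbrev incKti : KtiCat R ⥤ KInjCat R := ObjectProperty.ιOfLE fun _ h => h.1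

/-- The K-projective and K-injective resolution functors: `p` is right adjoint to the
inclusion `K_prj(R) ⥤ K(Prj R)` and `i` is left adjoint to the inclusion
`K_inj(R) ⥤ K(Inj R)`. -/
structure ResData (R : Type) [Ring R] where
  p : KProjCat R ⥤ KpCat R
  adjp : incKp R ⊣ p
  i : KInjCat R ⥤ KiCat R
  adji : i ⊣ incKi R

/-- The complete projective resolution functor `t`, right adjoint to the inclusion
`K_tac(Prj R) ⥤ K(Prj R)`. -/
structure CompResDataProj (R : Type) [Ring R] where
  t : KProjCat R ⥤ KtpCat R
  adjt : incKtp R ⊣ t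

/-- The complete injective resolution functor `s`, left adjoint to the inclusion
`K_tac(Inj R) ⥤ K(Inj R)`. -/
structure CompResDataInj (R : Type) [Ring R] where
  s : KInjCat R ⥤ KtiCat R
  adjs : s ⊣ incKti R

/-- A complex `X` has finite G-projective dimension if there is a short exact sequence
of complexes of projectives `0 ⟶ U ⟶ T ⟶ P ⟶ 0` with `T` totally acyclic, `P` a
K-projective resolution of `X`, and `Uⁿ = 0` for `n ≪ 0`. -/
def FiniteGProjDim (X : Cx R) : Prop :=
  ∃ (U T P : Cx R) (f : U ⟶ T) (g : T ⟶ P) (w : f ≫ g = 0),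
    (ShortComplex.mk f g w).ShortExact ∧
    IsProjCx R U ∧ IsProjCx R T ∧ IsProjCx R P ∧
    IsTotAcyclicProj R ((toK R).obj T) ∧
    IsKProjective R ((toK R).obj P) ∧ (∃ ρ : P ⟶ X, QuasiIso ρ) ∧
    (∃ a : ℤ, ∀ n < a, IsZero (U.X n))

/-- A complex `Y` has finite G-injective dimension if there is a short exact sequence
of complexes of injectives `0 ⟶ I ⟶ T ⟶ V ⟶ 0` with `T` totally acyclic, `I` a
K-injective resolution of `Y`, and `Vⁿ = 0` for `n ≫ 0`. -/
def FiniteGInjDim (Y : Cx R) : Prop :=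
  ∃ (I T V : Cx R) (f : I ⟶ T) (g : T ⟶ V) (w : f ≫ g = 0),
    (ShortComplex.mk f g w).ShortExact ∧
    IsInjCx R I ∧ IsInjCx R T ∧ IsInjCx R V ∧
    IsTotAcyclicInj R ((toK R).obj T) ∧
    IsKInjective R ((toK R).obj I) ∧ (∃ ρ : Y ⟶ I, QuasiIso ρ) ∧
    (∃ b : ℤ, ∀ n > b, IsZero (V.X n))

end GeneralRing


section Comm

variable (R : Type) [CommRing R]

/-! The following instance assumptions are all satisfiable for `ModuleCat R`;
they are exactly the hypotheses under which Mathlib provides the monoidal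
structure (total tensor product) on cochain complexes. -/
variable [(MonoidalCategory.curriedTensor (ModuleCat R)).Additive]
  [∀ (X₁ X₂ X₃ : GradedObject ℤ (ModuleCat R)), GradedObject.HasGoodTensor₁₂Tensor X₁ X₂ X₃]
  [∀ (X₁ X₂ X₃ : GradedObject ℤ (ModuleCat R)), GradedObject.HasGoodTensorTensor₂₃ X₁ X₂ X₃]
  [∀ (X₁ X₂ X₃ X₄ : GradedObject ℤ (ModuleCat R)), GradedObject.HasTensor₄ObjExt X₁ X₂ X₃ X₄]
  [∀ X₁, PreservesColimit (Functor.empty.{0} (ModuleCat R))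
    ((MonoidalCategory.curriedTensor (ModuleCat R)).obj X₁)]
  [∀ X₂, PreservesColimit (Functor.empty.{0} (ModuleCat R))
    ((MonoidalCategory.curriedTensor (ModuleCat R)).flip.obj X₂)]

/-- A complex of flat modules. -/
def IsFlatCx (X : Cx R) : Prop := ∀ n, Module.Flat R (X.X n)

/-- `K(Flat R)`, the homotopy category of complexes of flat modules. -/
abbrev KFlatCat := ObjectProperty.FullSubcategory fun X : Kh R => IsFlatCx R X.as

abbrev incFlat : KFlatCat R ⥤ Kh R := ObjectProperty.ι _

lemma flat_of_projCx {R : Type} [CommRing R] {X : Cx R} (h : IsProjCx R X) : IsFlatCx R X := by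
  intro n
  have h1 : Module.Projective R (X.X n) :=
    (IsProjective.iff_projective _).mpr (h n)
  haveI := h1
  infer_instance

/-- The inclusion `K(Prj R) ⥤ K(Flat R)`. -/
abbrev incProjFlat : KProjCat R ⥤ KFlatCat R :=
  ObjectProperty.ιOfLE (fun _ h => flat_of_projCx h)

/-- A dualizing complex: a bounded complex of injectives with finitely generated homology
such that the canonical map `R ⟶ Hom_R(D, D)` is a quasi-isomorphism. Since `D` is a
bounded complex of injectives, hence K-injective, the latter condition is equivalent to
the conjunction of `self_vanish` and `self_end` below, which express that
`Hom_{K(R)}(D, Σⁿ D) = 0` for `n ≠ 0` and that `R ≅ End_{K(R)}(D)` via `r ↦ r • 𝟙 D`. -/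
structure IsDualizingComplex (D : Cx R) : Prop where
  bounded : ∃ a b : ℤ, ∀ n : ℤ, (n < a ∨ b < n) → IsZero (D.X n)
  inj : IsInjCx R D
  fg : ∀ n : ℤ, Module.Finite R (D.homology n)
  self_vanish : ∀ n : ℤ, n ≠ 0 → ∀ f : (toK R).obj D ⟶ ((((toK R).obj D)⟦n⟧ : Kh R)), f = 0
  self_end : Function.Bijective (fun r : R => (toK R).map (r • 𝟙 D))

/-- The subcategory of complexes of flat modules (at the level of complexes). -/
abbrev CxFlatCat := ObjectProperty.FullSubcategory (IsFlatCx R)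

/-- The quotient functor restricted to complexes of flats. -/
abbrev toKFlat : CxFlatCat R ⥤ KFlatCat R :=
  ObjectProperty.lift _ (ObjectProperty.ι _ ⋙ toK R) (fun X => X.2)

/-- Data embodying the basic functors of the paper: the lift `Tf` of the tensor functor
`D ⊗ᵣ - : K(Flat R) ⥤ K(Inj R)` to the homotopy categories (`Tf` is pinned down, uniquely
up to isomorphism, by the natural isomorphism `pin`), a right adjoint `H` of `Tf` (which
concretely is given by `Hom_R(D, -)`), and a right adjoint `q` of the inclusion
`K(Prj R) ⥤ K(Flat R)`. -/
structure DualityData (D : Cx R) where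
  Tf : KFlatCat R ⥤ KInjCat R
  pin : ObjectProperty.ι (IsFlatCx R) ⋙ MonoidalCategory.tensorLeft D ⋙ toK R ≅
      toKFlat R ⋙ Tf ⋙ incInj R
  H : KInjCat R ⥤ KFlatCat R
  adjTH : Tf ⊣ H
  q : KFlatCat R ⥤ KProjCat R
  adjq : incProjFlat R ⊣ q

variable {R}

/-- The functor `T = D ⊗ᵣ - : K(Prj R) ⥤ K(Inj R)`. -/
def DualityData.T {D : Cx R} (dd : DualityData R D) : KProjCat R ⥤ KInjCat R :=
  incProjFlat R ⋙ dd.Tf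

/-- The functor `S = q ∘ Hom_R(D, -) : K(Inj R) ⥤ K(Prj R)`. -/
def DualityData.S {D : Cx R} (dd : DualityData R D) : KInjCat R ⥤ KProjCat R :=
  dd.H ⋙ dd.q

/-- The adjunction `T ⊣ S`. -/
def DualityData.adjTS {D : Cx R} (dd : DualityData R D) : dd.T ⊣ dd.S :=
  dd.adjq.comp dd.adjTH


variable {D : Cx R}

/-- The functor `G = i ∘ (D ⊗ᵣ -) : K_prj(R) ⥤ K_inj(R)`. -/
def Gfun (dd : DualityData R D) (rd : ResData R) : KpCat R ⥤ KiCat R :=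
  incKp R ⋙ dd.T ⋙ rd.i

/-- The functor `F = p ∘ q ∘ Hom_R(D, -) : K_inj(R) ⥤ K_prj(R)`. -/
def Ffun (dd : DualityData R D) (rd : ResData R) : KiCat R ⥤ KpCat R :=
  incKi R ⋙ dd.S ⋙ rd.p

/-- The adjunction `G ⊣ F`. -/
def adjGF (dd : DualityData R D) (rd : ResData R) : Gfun dd rd ⊣ Ffun dd rd :=
  (rd.adjp.comp dd.adjTS).comp rd.adji

/-- Membership in the Auslander category `Â(R)`: the unit `X ⟶ F(G(X))` is invertible,
i.e. the natural map `X ⟶ RHom_R(D, D ⊗^L_R X)` is an isomorphism. -/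
def memAhat (dd : DualityData R D) (rd : ResData R) (X : KpCat R) : Prop :=
  IsIso ((adjGF dd rd).unit.app X)

/-- Membership in the Bass category `B̂(R)`: the counit `G(F(Y)) ⟶ Y` is invertible,
i.e. the natural map `D ⊗^L_R RHom_R(D, Y) ⟶ Y` is an isomorphism. -/
def memBhat (dd : DualityData R D) (rd : ResData R) (Y : KiCat R) : Prop :=
  IsIso ((adjGF dd rd).counit.app Y)

end Comm

/-- A commutative noetherian ring is Gorenstein if each of its localizations at a prime
has finite injective dimension over itself; the finiteness of the self-injective
dimension is expressed through vanishing of `Ext` groups. -/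
def IsGorensteinRing (R : Type) [CommRing R] : Prop :=
  ∀ (p : Ideal R) [p.IsPrime], ∃ n : ℕ,
    ∀ (M : ModuleCat (Localization.AtPrime p)) (k : ℕ), n < k →
      Subsingleton (((Ext (Localization.AtPrime p) (ModuleCat (Localization.AtPrime p)) k).obj
        (Opposite.op M)).obj (ModuleCat.of _ (Localization.AtPrime p)))


end IKpaper

/-!
The limit of a tower `F : ℕᵒᵖ ⥤ C` in a preadditive category is the kernel of `id - shift` on
`∏ F(i)`. If the transition maps `F(i+1) ⟶ F(i)` are split epimorphisms for `i ≥ s`, then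
`id - shift` has a section `b ↦ a`: for `i ≤ s` take `aᵢ = ∑_{i ≤ j < s} bⱼ` pushed down to `F(i)`
(so `aₛ = 0`), and for `i ≥ s` obtain `aᵢ₊₁` from `aᵢ - bᵢ` through the splitting. Applied in each
degree, this makes `0 → lim X → ∏ X → ∏ X → 0` a degreewise split short exact sequence of
complexes. Its triangle in `K(R)` has the same second morphism `id - shift` as the triangle
defining `holim X`, so the first vertices of the two triangles are isomorphic.
-/

open Opposite

namespace IKpaper

section SequentialLimit

variable {C : Type*} [Category C] [Preadditive C] (F : ℕᵒᵖ ⥤ C)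

abbrev towerMap (i : ℕ) : F.obj (op (i + 1)) ⟶ F.obj (op i) :=
  F.map (homOfLE (Nat.le_add_right i 1)).op

variable {F} {P : C} {p : ∀ i, P ⟶ F.obj (op i)}

lemma comp_idSubShift_eq_zero (hP : IsLimit (Fan.mk P p)) {g : P ⟶ P}
    (hg : ∀ i, g ≫ p i = p i - p (i + 1) ≫ towerMap F i) {L : Cone F} {f : L.pt ⟶ P}
    (hf : ∀ i, f ≫ p i = L.π.app (op i)) : f ≫ g = 0 :=
  Fan.IsLimit.hom_ext hP _ _ fun i => by
    rw [fan_mk_proj, Category.assoc, hg, Preadditive.comp_sub, hf, ← Category.assoc, hf, L.w,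
      sub_self, zero_comp]

def isLimitKernelForkIdSubShift (hP : IsLimit (Fan.mk P p)) {g : P ⟶ P}
    (hg : ∀ i, g ≫ p i = p i - p (i + 1) ≫ towerMap F i) {L : Cone F} (hL : IsLimit L)
    {f : L.pt ⟶ P} (hf : ∀ i, f ≫ p i = L.π.app (op i)) :
    IsLimit (KernelFork.ofι f (comp_idSubShift_eq_zero hP hg hf)) :=
  KernelFork.IsLimit.ofι _ _
    (fun {W} t ht => hL.lift
      { pt := W
        π := NatTrans.ofOpSequence (fun i => t ≫ p i) fun i => by
          have hti : t ≫ g ≫ p i = 0 := by rw [← Category.assoc, ht, zero_comp]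
          rw [hg, Preadditive.comp_sub, sub_eq_zero] at hti
          simpa using hti })
    (fun t ht => Fan.IsLimit.hom_ext hP _ _ fun i => by
      rw [fan_mk_proj, Category.assoc, hf]
      exact hL.fac _ (op i))
    (fun t ht m hm => hL.hom_ext fun ⟨i⟩ => by
      rw [hL.fac, ← hf, ← Category.assoc, hm]
      rfl)

variable (p) (s : ℕ) (hs : ∀ i, s ≤ i → IsSplitEpi (towerMap F i))

def projMap (i j : ℕ) : P ⟶ F.obj (op i) :=
  if h : i ≤ j then p j ≫ F.map (homOfLE h).op else 0

def sectionComponent : ∀ i, P ⟶ F.obj (op i)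
  | 0 => ∑ j ∈ Finset.Ico 0 s, projMap p 0 j
  | i + 1 =>
    if h : s ≤ i then
      have := hs i h
      (sectionComponent i - p i) ≫ section_ (towerMap F i)
    else ∑ j ∈ Finset.Ico (i + 1) s, projMap p (i + 1) j

lemma sectionComponent_of_le {i : ℕ} (hi : i ≤ s) :
    sectionComponent p s hs i = ∑ j ∈ Finset.Ico i s, projMap p i j := by
  cases i with
  | zero => rfl
  | succ i => exact dif_neg (by omega)

lemma projMap_comp_towerMap {i j : ℕ} (hij : i + 1 ≤ j) :
    projMap p (i + 1) j ≫ towerMap F i = projMap p i j := by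
  rw [projMap, projMap, dif_pos hij, dif_pos (by omega), Category.assoc, ← F.map_comp]
  rfl

lemma sectionComponent_sub_comp_towerMap (i : ℕ) :
    sectionComponent p s hs i - sectionComponent p s hs (i + 1) ≫ towerMap F i = p i := by
  by_cases h : s ≤ i
  · have := hs i h
    rw [sectionComponent, dif_pos h, Category.assoc, IsSplitEpi.id, Category.comp_id,
      sub_sub_cancel]
  · rw [sectionComponent_of_le p s hs (by omega), sectionComponent_of_le p s hs (by omega),
      Finset.sum_eq_sum_Ico_succ_bot (by omega), Preadditive.sum_comp,
      Finset.sum_congr rfl fun j hj => projMap_comp_towerMap p (Finset.mem_Ico.1 hj).1,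
      add_sub_cancel_right, projMap, dif_pos le_rfl]
    exact (congrArg _ (F.map_id _)).trans (Category.comp_id _)

variable {p}

lemma isSplitEpi_idSubShift (hP : IsLimit (Fan.mk P p)) {g : P ⟶ P}
    (hg : ∀ i, g ≫ p i = p i - p (i + 1) ≫ towerMap F i) {s : ℕ}
    (hs : ∀ i, s ≤ i → IsSplitEpi (towerMap F i)) : IsSplitEpi g :=
  have hσ : ∀ i, Fan.IsLimit.lift hP (sectionComponent p s hs) ≫ p i =
      sectionComponent p s hs i :=
    Fan.IsLimit.fac hP _
  .mk' ⟨Fan.IsLimit.lift hP (sectionComponent p s hs), Fan.IsLimit.hom_ext hP _ _ fun i => by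
    rw [fan_mk_proj, Category.assoc, hg, Preadditive.comp_sub, hσ, ← Category.assoc, hσ,
      sectionComponent_sub_comp_towerMap, Category.id_comp]⟩

lemma lift_idSubShift_π [HasLimitsOfShape (Discrete ℕ) C] {M : ℕ → C}
    (e : ∀ i, M (i + 1) ⟶ M i) (i : ℕ) :
    (Pi.lift fun i => Pi.π M i - Pi.π M (i + 1) ≫ e i) ≫ Pi.π M i =
      Pi.π M i - (Pi.π M (i + 1) ≫ towerMap (Functor.ofOpSequence e) i : ∏ᶜ M ⟶ M i) := by
  simp [towerMap]

lemma lift_limit_π_comp_lift_idSubShift [HasLimitsOfShape (Discrete ℕ) C] {M : ℕ → C}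
    (e : ∀ i, M (i + 1) ⟶ M i) [HasLimit (Functor.ofOpSequence e)] :
    (Pi.lift fun i => limit.π (Functor.ofOpSequence e) (op i)) ≫
      (Pi.lift fun i => Pi.π M i - Pi.π M (i + 1) ≫ e i) = 0 :=
  comp_idSubShift_eq_zero (productIsProduct M) (lift_idSubShift_π e) (L := limit.cone _)
    fun i => Pi.lift_π _ i

variable {D : Type*} [Category D] [Preadditive D] in
lemma map_idSubShift (G : C ⥤ D) [G.Additive] {g : P ⟶ P}
    (hg : ∀ i, g ≫ p i = p i - p (i + 1) ≫ towerMap F i) (i : ℕ) :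
    G.map g ≫ G.map (p i) = G.map (p i) - G.map (p (i + 1)) ≫ G.map (towerMap F i) := by
  rw [← G.map_comp, hg, G.map_sub, G.map_comp]

end SequentialLimit

theorem nonempty_splitting_idSubShift {C : Type*} [Category C] [Abelian C] {F : ℕᵒᵖ ⥤ C}
    {P : C} {p : ∀ i, P ⟶ F.obj (op i)} (hP : IsLimit (Fan.mk P p)) {g : P ⟶ P}
    (hg : ∀ i, g ≫ p i = p i - p (i + 1) ≫ towerMap F i) {L : Cone F} (hL : IsLimit L)
    {f : L.pt ⟶ P} (hf : ∀ i, f ≫ p i = L.π.app (op i)) {s : ℕ}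
    (hs : ∀ i, s ≤ i → IsSplitEpi (towerMap F i)) :
    Nonempty (ShortComplex.mk f g (comp_idSubShift_eq_zero hP hg hf)).Splitting := by
  have hker := isLimitKernelForkIdSubShift hP hg hL hf
  have := isSplitEpi_idSubShift hP hg hs
  exact ⟨.ofExactOfSection _ (ShortComplex.exact_of_f_is_kernel _ hker) (section_ g)
    (IsSplitEpi.id g) (mono_of_isLimit_fork hker)⟩

theorem HomologicalComplex.nonempty_splitting_eval_idSubShift {A : Type*} [Category A]
    [Abelian A] [HasLimitsOfShape (Discrete ℕ) A] [HasLimitsOfShape ℕᵒᵖ A] {ι : Type*}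
    {c : ComplexShape ι} (X : ℕ → HomologicalComplex A c) (ε : ∀ i, X (i + 1) ⟶ X i) (n : ι)
    {s : ℕ} (hs : ∀ i, s ≤ i → IsSplitEpi ((ε i).f n)) :
    Nonempty (((ShortComplex.mk _ _ (lift_limit_π_comp_lift_idSubShift ε)).map
      (HomologicalComplex.eval A c n)).Splitting) := by
  let ev := HomologicalComplex.eval A c n
  refine nonempty_splitting_idSubShift (F := Functor.ofOpSequence ε ⋙ ev)
    (isLimitFanMkObjOfIsLimit ev _ _ (productIsProduct X))
    (map_idSubShift ev (F := Functor.ofOpSequence ε) (p := Pi.π X) (lift_idSubShift_π ε))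
    (isLimitOfPreserves ev (limit.isLimit _))
    (fun i => (ev.map_comp _ _).symm.trans (congrArg ev.map (Pi.lift_π _ i))) (s := s)
    fun i hi => ?_
  have := hs i hi
  simp only [towerMap, Functor.comp_map, Functor.ofOpSequence_map_homOfLE_succ]
  exact inferInstanceAs (IsSplitEpi ((ε i).f n))

theorem Pretriangulated.nonempty_iso_obj₁_of_arrow_iso_mor₂ {C : Type*} [Category C]
    [Preadditive C] [HasZeroObject C] [HasShift C ℤ] [∀ n : ℤ, (shiftFunctor C n).Additive]
    [Pretriangulated C] {T₁ T₂ : Triangle C} (hT₁ : T₁ ∈ distTriang C)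
    (hT₂ : T₂ ∈ distTriang C) (e : Arrow.mk T₁.mor₂ ≅ Arrow.mk T₂.mor₂) :
    Nonempty (T₁.obj₁ ≅ T₂.obj₁) := by
  obtain ⟨e', -⟩ :=
    exists_iso_of_arrow_iso _ _ (rot_of_distTriang _ hT₁) (rot_of_distTriang _ hT₂) e
  exact ⟨(shiftFunctor C (1 : ℤ)).preimageIso (Triangle.π₃.mapIso e')⟩

theorem statement2 (R : Type) [Ring R]
    (X : ℕ → Cx R) (ε : ∀ i, X (i + 1) ⟶ X i)
    (hiso : ∀ n : ℤ, ∃ s : ℕ, ∀ i, s ≤ i → IsIso ((ε i).f n)) :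
    ∃ w : (Pi.lift fun i => limit.π (Functor.ofOpSequence ε) (Opposite.op i)) ≫
        (Pi.lift fun i => Pi.π X i - Pi.π X (i + 1) ≫ ε i) = 0,
      -- the sequence is short exact ...
      (ShortComplex.mk
        (Pi.lift fun i => limit.π (Functor.ofOpSequence ε) (Opposite.op i))
        (Pi.lift fun i => Pi.π X i - Pi.π X (i + 1) ≫ ε i) w).ShortExact ∧
      -- ... and degreewise split
      (∀ n : ℤ, Nonempty
        (((ShortComplex.mk
          (Pi.lift fun i => limit.π (Functor.ofOpSequence ε) (Opposite.op i))
          (Pi.lift fun i => Pi.π X i - Pi.π X (i + 1) ≫ ε i) w).map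
            (HomologicalComplex.eval (ModuleCat R) (ComplexShape.up ℤ) n)).Splitting)) ∧
      -- in particular, the homotopy limit is isomorphic to the limit in `K(R)`
      (∀ (holimX : Kh R) (a : holimX ⟶ (toK R).obj (piObj X))
        (c : (toK R).obj (piObj X) ⟶ ((holimX⟦(1 : ℤ)⟧ : Kh R))),
        Triangle.mk a ((toK R).map (Pi.lift fun i => Pi.π X i - Pi.π X (i + 1) ≫ ε i)) c ∈
            (distTriang (Kh R)) →
        Nonempty (holimX ≅ (toK R).obj (limit (Functor.ofOpSequence ε)))) := by
  have w := lift_limit_π_comp_lift_idSubShift ε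
  have hsplit : ∀ n : ℤ, Nonempty (((ShortComplex.mk _ _ w).map
      (HomologicalComplex.eval (ModuleCat R) (ComplexShape.up ℤ) n)).Splitting) := fun n => by
    obtain ⟨s, hs⟩ := hiso n
    exact HomologicalComplex.nonempty_splitting_eval_idSubShift X ε n fun i hi =>
      have := hs i hi
      inferInstance
  refine ⟨w, HomologicalComplex.shortExact_of_degreewise_shortExact _
    fun n => (hsplit n).some.shortExact, hsplit, fun holimX a c hT => ?_⟩
  exact Pretriangulated.nonempty_iso_obj₁_of_arrow_iso_mor₂ hT
    ((HomotopyCategory.distinguished_iff_iso_trianglehOfDegreewiseSplit _).2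
      ⟨_, fun n => (hsplit n).some, ⟨Iso.refl _⟩⟩) (Iso.refl _)

end IKpaper
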